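/- arXiv:2512.10083 — 5 statements merged into one kernel-verified Lean document; each statement's English description precedes it below -/
import Mathlib

section
/- Let V_H be a finite-dimensional subspace of H¹₀(D), P_H the L²-orthogonal projection onto V_H, W = ker(P_H) ∩ H¹₀(D), and (·,·)_X an inner product on H¹₀(D) which is equivalent to the H¹-inner product. Define the corrector C : V_H → W by (C v_H, w)_X = (v_H, w)_X for all w ∈ W, and L⁻¹ by (L⁻¹u, v)_X = (u,v)_{L²} for all v ∈ H¹₀(D). Then L⁻¹(V_H) = (I − C)(V_H). -/
/-!
Every `Linv z` with `z ∈ VH` is `aX`-orthogonal to `W = ker PH`, and any `u` that is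
`aX`-orthogonal to `W` satisfies `u = (I - C)(PH u)`, because `u - (I - C)(PH u)` lies in `W`
and is `aX`-orthogonal to `W`. This gives `Linv (VH) ⊆ (I - C)(VH)`. Conversely, `z ↦ PH (Linv z)`
is an injective linear endomorphism of the finite-dimensional space `VH`, hence surjective, so every
`vH - C vH` is of the form `Linv z`.
-/

namespace LinearMap.BilinForm

variable {H : Type*} [AddCommGroup H] [Module ℝ H]

theorem eq_zero_of_apply_self_eq_zero {a : LinearMap.BilinForm ℝ H}
    (hpos : ∀ v : H, v ≠ 0 → 0 < a v v) {v : H} (hv : a v v = 0) : v = 0 := by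
  by_contra h
  exact (hpos v h).ne' hv

theorem eq_of_forall_apply_eq {a : LinearMap.BilinForm ℝ H} (hpos : ∀ v : H, v ≠ 0 → 0 < a v v)
    {u u' : H} (h : ∀ v, a u v = a u' v) : u = u' :=
  sub_eq_zero.mp <| eq_zero_of_apply_self_eq_zero hpos <| by
    simp only [map_sub, LinearMap.sub_apply, h, sub_self]

theorem isLinearMap_of_forall_apply_eq {a b : LinearMap.BilinForm ℝ H}
    (hpos : ∀ v : H, v ≠ 0 → 0 < a v v) {L : H → H} (hL : ∀ z v, a (L z) v = b z v) :
    IsLinearMap ℝ L where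
  map_add x y := eq_of_forall_apply_eq hpos fun v => by simp [hL]
  map_smul c x := eq_of_forall_apply_eq hpos fun v => by simp [hL]

end LinearMap.BilinForm

open LinearMap.BilinForm

section

variable {H : Type*} [AddCommGroup H] [Module ℝ H]

theorem proj_map_eq_self_of_mem {b : LinearMap.BilinForm ℝ H}
    (hbpos : ∀ v : H, v ≠ 0 → 0 < b v v) {VH : Submodule ℝ H} {PH : H →ₗ[ℝ] H}
    (hPHmem : ∀ v : H, PH v ∈ VH) (hPHproj : ∀ v : H, ∀ vH ∈ VH, b (v - PH v) vH = 0)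
    {v : H} (hv : v ∈ VH) : PH v = v :=
  (sub_eq_zero.mp <| eq_zero_of_apply_self_eq_zero hbpos <|
    hPHproj v _ (VH.sub_mem hv (hPHmem v))).symm

theorem sub_corrector_map_eq_self {aX : LinearMap.BilinForm ℝ H}
    (haXpos : ∀ v : H, v ≠ 0 → 0 < aX v v) {PH : H →ₗ[ℝ] H} (hPHidem : ∀ v, PH (PH v) = PH v)
    {C : H → H} (hCmem : ∀ vH : H, PH (C vH) = 0)
    (hC : ∀ vH w : H, PH w = 0 → aX (C vH) w = aX vH w)
    {u : H} (hu : ∀ w, PH w = 0 → aX u w = 0) : PH u - C (PH u) = u := by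
  set d := u - (PH u - C (PH u))
  have hd : PH d = 0 := by simp [d, hPHidem, hCmem]
  have hdd : aX d d = 0 := by simp [d, hu d hd, hC _ d hd]
  exact (sub_eq_zero.mp (eq_zero_of_apply_self_eq_zero haXpos hdd)).symm

theorem apply_solution_eq_zero_of_map_eq_zero {aX b : LinearMap.BilinForm ℝ H}
    (hbsymm : ∀ u v : H, b u v = b v u) {VH : Submodule ℝ H} {PH : H →ₗ[ℝ] H}
    (hPHproj : ∀ v : H, ∀ vH ∈ VH, b (v - PH v) vH = 0) {Linv : H → H}
    (hLinv : ∀ z v : H, aX (Linv z) v = b z v) {z w : H} (hz : z ∈ VH) (hw : PH w = 0) :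
    aX (Linv z) w = 0 := by
  simpa [hLinv, hbsymm z w, hw] using hPHproj w z hz

theorem eq_zero_of_map_solution_eq_zero {aX b : LinearMap.BilinForm ℝ H}
    (haXpos : ∀ v : H, v ≠ 0 → 0 < aX v v) (hbsymm : ∀ u v : H, b u v = b v u)
    (hbpos : ∀ v : H, v ≠ 0 → 0 < b v v) {VH : Submodule ℝ H} {PH : H →ₗ[ℝ] H}
    (hPHproj : ∀ v : H, ∀ vH ∈ VH, b (v - PH v) vH = 0) {Linv : H → H}
    (hLinv : ∀ z v : H, aX (Linv z) v = b z v) {z : H} (hz : z ∈ VH) (h : PH (Linv z) = 0) :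
    z = 0 := by
  have hL : Linv z = 0 := eq_zero_of_apply_self_eq_zero haXpos <|
    apply_solution_eq_zero_of_map_eq_zero hbsymm hPHproj hLinv hz h
  exact eq_zero_of_apply_self_eq_zero hbpos <| by rw [← hLinv, hL, map_zero, LinearMap.zero_apply]

theorem exists_mem_map_solution_eq {aX b : LinearMap.BilinForm ℝ H}
    (haXpos : ∀ v : H, v ≠ 0 → 0 < aX v v) (hbsymm : ∀ u v : H, b u v = b v u)
    (hbpos : ∀ v : H, v ≠ 0 → 0 < b v v) {VH : Submodule ℝ H} [FiniteDimensional ℝ VH]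
    {PH : H →ₗ[ℝ] H} (hPHmem : ∀ v : H, PH v ∈ VH)
    (hPHproj : ∀ v : H, ∀ vH ∈ VH, b (v - PH v) vH = 0) {Linv : H → H}
    (hLinv : ∀ z v : H, aX (Linv z) v = b z v) {v : H} (hv : v ∈ VH) :
    ∃ z ∈ VH, PH (Linv z) = v := by
  let T : VH →ₗ[ℝ] VH := (PH ∘ₗ (isLinearMap_of_forall_apply_eq haXpos hLinv).mk' Linv).restrict
    fun z _ => hPHmem (Linv z)
  have hT : Function.Injective T := (injective_iff_map_eq_zero T).mpr fun z hz =>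
    Subtype.ext <| eq_zero_of_map_solution_eq_zero haXpos hbsymm hbpos hPHproj hLinv z.2
      (congrArg Subtype.val hz)
  obtain ⟨z, hz⟩ := LinearMap.injective_iff_surjective.mp hT ⟨v, hv⟩
  exact ⟨z, z.2, congrArg Subtype.val hz⟩

end

theorem metric_driven_space_eq_LOD_space_general
    {H : Type*} [AddCommGroup H] [Module ℝ H]
    (aX b : LinearMap.BilinForm ℝ H)
    (hbsymm : ∀ u v : H, b u v = b v u)
    (haXpos : ∀ v : H, v ≠ 0 → 0 < aX v v)
    (hbpos : ∀ v : H, v ≠ 0 → 0 < b v v)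
    (VH : Submodule ℝ H) [FiniteDimensional ℝ VH]
    (PH : H →ₗ[ℝ] H)
    (hPHmem : ∀ v : H, PH v ∈ VH)
    (hPHproj : ∀ v : H, ∀ vH ∈ VH, b (v - PH v) vH = 0)
    (C : H → H)
    (hCmem : ∀ vH : H, PH (C vH) = 0)
    (hC : ∀ vH w : H, PH w = 0 → aX (C vH) w = aX vH w)
    (Linv : H → H)
    (hLinv : ∀ z v : H, aX (Linv z) v = b z v) :
    Linv '' (VH : Set H) = (fun vH => vH - C vH) '' (VH : Set H) := by
  have hPHidem : ∀ v, PH (PH v) = PH v := fun v =>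
    proj_map_eq_self_of_mem hbpos hPHmem hPHproj (hPHmem v)
  have hsolution {z : H} (hz : z ∈ VH) : PH (Linv z) - C (PH (Linv z)) = Linv z :=
    sub_corrector_map_eq_self haXpos hPHidem hCmem hC fun _ hw =>
      apply_solution_eq_zero_of_map_eq_zero hbsymm hPHproj hLinv hz hw
  ext u
  constructor
  · rintro ⟨z, hz, rfl⟩
    exact ⟨PH (Linv z), hPHmem _, hsolution hz⟩
  · rintro ⟨v, hv, rfl⟩
    obtain ⟨z, hz, rfl⟩ := exists_mem_map_solution_eq haXpos hbsymm hbpos hPHmem hPHproj hLinv hv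
    exact ⟨z, hz, (hsolution hz).symm⟩

/-- Let `VH` be a finite-dimensional subspace of `H` (playing the role of
`H¹₀(D)`), `PH` the `L²`-orthogonal projection onto `VH`, `W = ker PH` the detail
space, and `aX` an energy inner product on `H`. Let `C : VH → W` be the corrector,
defined by `aX (C vH) w = aX vH w` for all `w ∈ W` with `C vH ∈ W`, and let `Linv` be
the solution operator `aX (Linv z) v = (z,v)_{L²}` for all `v`. Then
`Linv (VH) = (I − C)(VH)`. -/
theorem metric_driven_space_eq_LOD_space
    {H : Type*} [AddCommGroup H] [Module ℝ H]
    (aX b : LinearMap.BilinForm ℝ H)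
    (haXsymm : ∀ u v : H, aX u v = aX v u)
    (hbsymm : ∀ u v : H, b u v = b v u)
    (haXpos : ∀ v : H, v ≠ 0 → 0 < aX v v)
    (hbpos : ∀ v : H, v ≠ 0 → 0 < b v v)
    (VH : Submodule ℝ H) [FiniteDimensional ℝ VH]
    (PH : H →ₗ[ℝ] H)
    (hPHmem : ∀ v : H, PH v ∈ VH)
    (hPHproj : ∀ v : H, ∀ vH ∈ VH, b (v - PH v) vH = 0)
    (C : H → H)
    (hCmem : ∀ vH : H, PH (C vH) = 0)
    (hC : ∀ vH w : H, PH w = 0 → aX (C vH) w = aX vH w)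
    (Linv : H → H)
    (hLinv : ∀ z v : H, aX (Linv z) v = b z v) :
    Linv '' (VH : Set H) = (fun vH => vH - C vH) '' (VH : Set H) :=
  metric_driven_space_eq_LOD_space_general aX b hbsymm haXpos hbpos VH PH hPHmem hPHproj C hCmem hC
    Linv hLinv
end

section
/- Under the same assumptions, the restriction of L⁻¹ ∘ P_H to V_H^L := L⁻¹(V_H) is injective, hence invertible as a linear map from V_H^L to V_H^L. -/
/-!
If `Linv (PH (Linv p)) = Linv (PH (Linv q))` with `p, q ∈ VH`, then testing against `b` shows that
`PH v` is `b`-orthogonal to everything, where `v = Linv p - Linv q` solves `aX v = b (p - q)`.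
Since `p - q ∈ VH` and `v - PH v` is `b`-orthogonal to `VH`, this gives
`aX v v = b v (p - q) = b (PH v) (p - q) = 0`, so `v = 0` by coercivity: this is the uniqueness
of the saddle point system `v = Linv p`, `PH v = 0`, in a slightly stronger form.
-/

section SaddlePoint

variable {H : Type*} [AddCommGroup H] [Module ℝ H] (aX b : LinearMap.BilinForm ℝ H)

theorem eq_zero_of_saddle_point (haXpos : ∀ v : H, v ≠ 0 → 0 < aX v v)
    (hbsymm : ∀ u v : H, b u v = b v u) {VH : Submodule ℝ H} {PH : H → H}
    (hPHproj : ∀ v : H, ∀ vH ∈ VH, b (v - PH v) vH = 0) {v p : H} (hp : p ∈ VH)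
    (hv : ∀ w, aX v w = b p w) (hPv : b (PH v) p = 0) : v = 0 := by
  by_contra hv0
  have hvv : aX v v = 0 :=
    calc aX v v = b (v - PH v) p + b (PH v) p := by
          rw [hv, hbsymm, ← LinearMap.add_apply, ← map_add, sub_add_cancel]
      _ = 0 := by rw [hPHproj v p hp, hPv, add_zero]
  exact (haXpos v hv0).ne' hvv

theorem solution_sub_solution_solves {Linv : H → H}
    (hLinv : ∀ z v : H, aX (Linv z) v = b z v) (p q w : H) :
    aX (Linv p - Linv q) w = b (p - q) w := by
  simp only [map_sub, LinearMap.sub_apply, hLinv]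

end SaddlePoint

theorem LinvPH_injective_on_VHL_general
    {H : Type*} [AddCommGroup H] [Module ℝ H]
    (aX b : LinearMap.BilinForm ℝ H)
    (hbsymm : ∀ u v : H, b u v = b v u)
    (haXpos : ∀ v : H, v ≠ 0 → 0 < aX v v)
    (VH : Submodule ℝ H)
    (PH : H →ₗ[ℝ] H)
    (hPHmem : ∀ v : H, PH v ∈ VH)
    (hPHproj : ∀ v : H, ∀ vH ∈ VH, b (v - PH v) vH = 0)
    (Linv : H → H)
    (hLinv : ∀ z v : H, aX (Linv z) v = b z v) :
    Set.MapsTo (fun v => Linv (PH v)) (Linv '' (VH : Set H)) (Linv '' (VH : Set H)) ∧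
    Set.InjOn (fun v => Linv (PH v)) (Linv '' (VH : Set H)) := by
  refine ⟨fun _ ⟨p, _, hx⟩ => ⟨PH (Linv p), hPHmem _, hx ▸ rfl⟩, ?_⟩
  rintro _ ⟨p, hp, rfl⟩ _ ⟨q, hq, rfl⟩ hpq
  have hPv : b (PH (Linv p - Linv q)) (p - q) = 0 := by
    rw [map_sub PH, map_sub b, LinearMap.sub_apply, ← hLinv, ← hLinv, sub_eq_zero]
    exact congrArg (aX · (p - q)) hpq
  have hv := eq_zero_of_saddle_point aX b haXpos hbsymm hPHproj (sub_mem hp hq)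
    (solution_sub_solution_solves aX b hLinv p q) hPv
  exact sub_eq_zero.mp hv

/-- Under the same assumptions as before (finite-dimensional subspace
`VH`, `L²`-projection `PH` onto `VH`, solution operator `Linv` of the symmetric
coercive energy form `aX`, with `V_H^L := Linv(VH)`), the restriction of
`Linv ∘ PH` to `V_H^L` maps `V_H^L` into itself and is injective there, hence
invertible as a linear map from `V_H^L` to `V_H^L`. -/
theorem LinvPH_injective_on_VHL
    {H : Type*} [AddCommGroup H] [Module ℝ H]
    (aX b : LinearMap.BilinForm ℝ H)
    (haXsymm : ∀ u v : H, aX u v = aX v u)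
    (hbsymm : ∀ u v : H, b u v = b v u)
    (haXpos : ∀ v : H, v ≠ 0 → 0 < aX v v)
    (hbpos : ∀ v : H, v ≠ 0 → 0 < b v v)
    (VH : Submodule ℝ H) [FiniteDimensional ℝ VH]
    (PH : H →ₗ[ℝ] H)
    (hPHmem : ∀ v : H, PH v ∈ VH)
    (hPHproj : ∀ v : H, ∀ vH ∈ VH, b (v - PH v) vH = 0)
    (Linv : H → H)
    (hLinv : ∀ z v : H, aX (Linv z) v = b z v) :
    Set.MapsTo (fun v => Linv (PH v)) (Linv '' (VH : Set H)) (Linv '' (VH : Set H)) ∧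
    Set.InjOn (fun v => Linv (PH v)) (Linv '' (VH : Set H)) :=
  LinvPH_injective_on_VHL_general aX b hbsymm haXpos VH PH hPHmem hPHproj Linv hLinv
end

section
/- (Coercivity of the spin-orbit operator L₀.) Let D ⊂ ℝ^d (d = 2,3) be a bounded Lipschitz domain, V₁, V₂ ∈ L^∞(D, ℝ_{≥0}) with V_j(x) − (|δ| + |Ω| + 2k₀²)/2 ≥ 0 a.e. for j = 1,2, and δ, Ω, k₀ ∈ ℝ. Define for v = (v₁, v₂), w = (w₁, w₂) ∈ H¹₀(D, ℂ²): ⟨L₀v, w⟩ = Re ∫_D Σ_{j=1,2} (½ ∇v_j·∇w̄_j + V_j v_j w̄_j) + (δ/2)(v₁w̄₁ − v₂w̄₂) + (Ω/2)(v₁w̄₂ + v₂w̄₁) + i k₀ (w̄₁ ∂₁v₁ − w̄₂ ∂₁v₂) dx. Then ⟨L₀v, v⟩ ≥ ¼ ‖∇v‖²_{L²(D)²} for all v ∈ H¹₀(D, ℂ²). -/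
/-!
The inequality holds pointwise, so it suffices to integrate it. By Young's inequality the
spin-orbit term satisfies `|k₀| ‖v_j‖ ‖∂₁v_j‖ ≤ k₀² ‖v_j‖² + ¼ ‖∂₁v_j‖²`, which costs half of the
kinetic density `½ |∇v_j|²`; the detuning term costs `(|δ|/2) ‖v_j‖²` and the Rabi coupling
`(|Ω|/2) ‖v_j‖²`. The lower bound on the potentials `V_j` pays for all three zeroth-order costs.
-/

open MeasureTheory ComplexConjugate

lemma abs_mul_mul_le_sq_mul_sq_add (k a b : ℝ) : |k| * a * b ≤ k ^ 2 * a ^ 2 + b ^ 2 / 4 := by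
  nlinarith [sq_nonneg (|k| * a - b / 2), sq_abs k]

lemma neg_le_re_I_mul_ofReal_mul_conj_mul_sub (k : ℝ) (a₁ a₂ b₁ b₂ : ℂ) :
    -(k ^ 2 * (‖a₁‖ ^ 2 + ‖a₂‖ ^ 2) + (‖b₁‖ ^ 2 + ‖b₂‖ ^ 2) / 4) ≤
      (Complex.I * k * (conj a₁ * b₁ - conj a₂ * b₂)).re := by
  have hnorm : ‖Complex.I * k * (conj a₁ * b₁ - conj a₂ * b₂)‖ ≤
      |k| * ‖a₁‖ * ‖b₁‖ + |k| * ‖a₂‖ * ‖b₂‖ := by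
    calc ‖Complex.I * k * (conj a₁ * b₁ - conj a₂ * b₂)‖
        = |k| * ‖conj a₁ * b₁ - conj a₂ * b₂‖ := by
          rw [norm_mul, norm_mul, Complex.norm_I, Complex.norm_real, Real.norm_eq_abs, one_mul]
      _ ≤ |k| * (‖a₁‖ * ‖b₁‖ + ‖a₂‖ * ‖b₂‖) := by
          gcongr
          refine (norm_sub_le _ _).trans_eq ?_
          rw [norm_mul, norm_mul, RCLike.norm_conj, RCLike.norm_conj]
      _ = |k| * ‖a₁‖ * ‖b₁‖ + |k| * ‖a₂‖ * ‖b₂‖ := by ring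
  linarith [neg_abs_le (Complex.I * k * (conj a₁ * b₁ - conj a₂ * b₂)).re,
    Complex.abs_re_le_norm (Complex.I * k * (conj a₁ * b₁ - conj a₂ * b₂)),
    abs_mul_mul_le_sq_mul_sq_add k ‖a₁‖ ‖b₁‖, abs_mul_mul_le_sq_mul_sq_add k ‖a₂‖ ‖b₂‖]

lemma neg_le_mul_re_mul_conj (Ω : ℝ) (a b : ℂ) :
    -(|Ω| / 2 * (‖a‖ ^ 2 + ‖b‖ ^ 2)) ≤ Ω * (a * conj b).re := by
  have hre : |(a * conj b).re| ≤ ‖a‖ * ‖b‖ :=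
    (Complex.abs_re_le_norm _).trans_eq (by rw [norm_mul, RCLike.norm_conj])
  have hamgm : |Ω| * (‖a‖ * ‖b‖) ≤ |Ω| / 2 * (‖a‖ ^ 2 + ‖b‖ ^ 2) := by
    nlinarith [sq_nonneg (‖a‖ - ‖b‖), abs_nonneg Ω]
  have hprod : |Ω * (a * conj b).re| ≤ |Ω| * (‖a‖ * ‖b‖) := by
    rw [abs_mul]; gcongr
  linarith [neg_abs_le (Ω * (a * conj b).re)]

lemma neg_le_mul_sub_of_nonneg (δ : ℝ) {x y : ℝ} (hx : 0 ≤ x) (hy : 0 ≤ y) :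
    -(|δ| * (x + y)) ≤ δ * (x - y) := by
  rcases abs_cases δ with ⟨h, _⟩ | ⟨h, _⟩ <;> nlinarith

/-- The integrand of `⟨L₀ v, v⟩` at one point, where `v = (a₁, a₂)` and `∇v_j = b_j`;
`∂₁` is the coordinate `i₀`. -/
noncomputable def spinOrbitEnergyDensity {ι : Type*} [Fintype ι] (i₀ : ι)
    (V₁ V₂ δ Ω k₀ : ℝ) (a₁ a₂ : ℂ) (b₁ b₂ : ι → ℂ) : ℝ :=
  (1 / 2) * ((∑ i, ‖b₁ i‖ ^ 2) + (∑ i, ‖b₂ i‖ ^ 2))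
    + V₁ * ‖a₁‖ ^ 2 + V₂ * ‖a₂‖ ^ 2
    + (δ / 2) * (‖a₁‖ ^ 2 - ‖a₂‖ ^ 2)
    + Ω * (a₁ * conj a₂).re
    + (Complex.I * (k₀ : ℂ) * (conj a₁ * b₁ i₀ - conj a₂ * b₂ i₀)).re

lemma quarter_sum_sq_norm_le_spinOrbitEnergyDensity {ι : Type*} [Fintype ι] (i₀ : ι)
    {V₁ V₂ : ℝ} (δ Ω k₀ : ℝ)
    (hV₁ : (|δ| + |Ω| + 2 * k₀ ^ 2) / 2 ≤ V₁) (hV₂ : (|δ| + |Ω| + 2 * k₀ ^ 2) / 2 ≤ V₂)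
    (a₁ a₂ : ℂ) (b₁ b₂ : ι → ℂ) :
    (1 / 4) * ((∑ i, ‖b₁ i‖ ^ 2) + (∑ i, ‖b₂ i‖ ^ 2)) ≤
      spinOrbitEnergyDensity i₀ V₁ V₂ δ Ω k₀ a₁ a₂ b₁ b₂ := by
  have hb₁ : ‖b₁ i₀‖ ^ 2 ≤ ∑ i, ‖b₁ i‖ ^ 2 :=
    Finset.single_le_sum (fun i _ => sq_nonneg ‖b₁ i‖) (Finset.mem_univ i₀)
  have hb₂ : ‖b₂ i₀‖ ^ 2 ≤ ∑ i, ‖b₂ i‖ ^ 2 :=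
    Finset.single_le_sum (fun i _ => sq_nonneg ‖b₂ i‖) (Finset.mem_univ i₀)
  have hpot₁ := mul_le_mul_of_nonneg_right hV₁ (sq_nonneg ‖a₁‖)
  have hpot₂ := mul_le_mul_of_nonneg_right hV₂ (sq_nonneg ‖a₂‖)
  unfold spinOrbitEnergyDensity
  linarith [neg_le_re_I_mul_ofReal_mul_conj_mul_sub k₀ a₁ a₂ (b₁ i₀) (b₂ i₀),
    neg_le_mul_re_mul_conj Ω a₁ a₂,
    neg_le_mul_sub_of_nonneg δ (sq_nonneg ‖a₁‖) (sq_nonneg ‖a₂‖)]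

theorem spin_orbit_L0_coercive_general
    {α : Type*} [MeasurableSpace α] (μ : Measure α)
    {d : ℕ} (hd : 0 < d)
    (V1 V2 : α → ℝ) (δ Ω k₀ : ℝ)
    (hV1 : ∀ᵐ x ∂μ, (|δ| + |Ω| + 2 * k₀ ^ 2) / 2 ≤ V1 x)
    (hV2 : ∀ᵐ x ∂μ, (|δ| + |Ω| + 2 * k₀ ^ 2) / 2 ≤ V2 x)
    (v1 v2 : α → ℂ) (g1 g2 : α → Fin d → ℂ)
    (hint : Integrable (fun x =>
      (1 / 2) * ((∑ i, ‖g1 x i‖ ^ 2) + (∑ i, ‖g2 x i‖ ^ 2))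
        + V1 x * ‖v1 x‖ ^ 2 + V2 x * ‖v2 x‖ ^ 2
        + (δ / 2) * (‖v1 x‖ ^ 2 - ‖v2 x‖ ^ 2)
        + Ω * (v1 x * starRingEnd ℂ (v2 x)).re
        + (Complex.I * (k₀ : ℂ) *
            (starRingEnd ℂ (v1 x) * g1 x ⟨0, hd⟩
              - starRingEnd ℂ (v2 x) * g2 x ⟨0, hd⟩)).re) μ)
    (hgint : Integrable (fun x => (∑ i, ‖g1 x i‖ ^ 2) + (∑ i, ‖g2 x i‖ ^ 2)) μ) :
    (1 / 4) * ∫ x, ((∑ i, ‖g1 x i‖ ^ 2) + (∑ i, ‖g2 x i‖ ^ 2)) ∂μ ≤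
      ∫ x, ((1 / 2) * ((∑ i, ‖g1 x i‖ ^ 2) + (∑ i, ‖g2 x i‖ ^ 2))
        + V1 x * ‖v1 x‖ ^ 2 + V2 x * ‖v2 x‖ ^ 2
        + (δ / 2) * (‖v1 x‖ ^ 2 - ‖v2 x‖ ^ 2)
        + Ω * (v1 x * starRingEnd ℂ (v2 x)).re
        + (Complex.I * (k₀ : ℂ) *
            (starRingEnd ℂ (v1 x) * g1 x ⟨0, hd⟩
              - starRingEnd ℂ (v2 x) * g2 x ⟨0, hd⟩)).re) ∂μ := by
  rw [← integral_const_mul]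
  refine integral_mono_ae (hgint.const_mul _) hint ?_
  filter_upwards [hV1, hV2] with x hV1x hV2x
  exact quarter_sum_sq_norm_le_spinOrbitEnergyDensity ⟨0, hd⟩ δ Ω k₀ hV1x hV2x
    (v1 x) (v2 x) (g1 x) (g2 x)

/-- Coercivity of the spin-orbit operator `L₀`: `D` is a (bounded
Lipschitz) domain in `ℝ^d`, `d = 2, 3`, modeled by a measure `μ` on `α`;
`v₁, v₂ : α → ℂ` are the components of `v ∈ H¹₀(D, ℂ²)` with gradients
`g₁, g₂ : α → (Fin d → ℂ)` (so `∂₁ v_j = g_j · e₁`). The trapping potentials satisfy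
`V_j(x) − (|δ| + |Ω| + 2k₀²)/2 ≥ 0` a.e. Then
`⟨L₀ v, v⟩ = Re ∫ Σ_j (½|∇v_j|² + V_j |v_j|²) + (δ/2)(|v₁|² − |v₂|²) + Ω Re(v₁ v̄₂)
 + i k₀ (v̄₁ ∂₁v₁ − v̄₂ ∂₁v₂) dx ≥ ¼ ∫ |∇v₁|² + |∇v₂|² dx`. -/
theorem spin_orbit_L0_coercive
    {α : Type*} [MeasurableSpace α] (μ : Measure α)
    {d : ℕ} (hd : 0 < d) (hdim : d = 2 ∨ d = 3)
    (V1 V2 : α → ℝ) (δ Ω k₀ : ℝ)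
    (hV1 : ∀ᵐ x ∂μ, (|δ| + |Ω| + 2 * k₀ ^ 2) / 2 ≤ V1 x)
    (hV2 : ∀ᵐ x ∂μ, (|δ| + |Ω| + 2 * k₀ ^ 2) / 2 ≤ V2 x)
    (v1 v2 : α → ℂ) (g1 g2 : α → Fin d → ℂ)
    (hint : Integrable (fun x =>
      (1 / 2) * ((∑ i, ‖g1 x i‖ ^ 2) + (∑ i, ‖g2 x i‖ ^ 2))
        + V1 x * ‖v1 x‖ ^ 2 + V2 x * ‖v2 x‖ ^ 2
        + (δ / 2) * (‖v1 x‖ ^ 2 - ‖v2 x‖ ^ 2)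
        + Ω * (v1 x * starRingEnd ℂ (v2 x)).re
        + (Complex.I * (k₀ : ℂ) *
            (starRingEnd ℂ (v1 x) * g1 x ⟨0, hd⟩
              - starRingEnd ℂ (v2 x) * g2 x ⟨0, hd⟩)).re) μ)
    (hgint : Integrable (fun x => (∑ i, ‖g1 x i‖ ^ 2) + (∑ i, ‖g2 x i‖ ^ 2)) μ)
    (hvint : Integrable (fun x => ‖v1 x‖ ^ 2 + ‖v2 x‖ ^ 2) μ)
    (hVvint : Integrable (fun x => V1 x * ‖v1 x‖ ^ 2 + V2 x * ‖v2 x‖ ^ 2) μ) :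
    (1 / 4) * ∫ x, ((∑ i, ‖g1 x i‖ ^ 2) + (∑ i, ‖g2 x i‖ ^ 2)) ∂μ ≤
      ∫ x, ((1 / 2) * ((∑ i, ‖g1 x i‖ ^ 2) + (∑ i, ‖g2 x i‖ ^ 2))
        + V1 x * ‖v1 x‖ ^ 2 + V2 x * ‖v2 x‖ ^ 2
        + (δ / 2) * (‖v1 x‖ ^ 2 - ‖v2 x‖ ^ 2)
        + Ω * (v1 x * starRingEnd ℂ (v2 x)).re
        + (Complex.I * (k₀ : ℂ) *
            (starRingEnd ℂ (v1 x) * g1 x ⟨0, hd⟩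
              - starRingEnd ℂ (v2 x) * g2 x ⟨0, hd⟩)).re) ∂μ :=
  spin_orbit_L0_coercive_general μ hd V1 V2 δ Ω k₀ hV1 hV2 v1 v2 g1 g2 hint hgint
end

section
/- (Mass increase of the preliminary iterate.) Let H be a real Hilbert space with two inner products (·,·)_{L²} and (·,·)_X (the X-product depending on uⁿ). Given uⁿ with ‖uⁿ‖_{L²} = 1, set γ = (L⁻¹uⁿ, uⁿ)_{L²}^{-1} where (L⁻¹uⁿ, v)_X = (uⁿ, v)_{L²}, and define u_prel^{n+1} = (1−τ)uⁿ + τ γ L⁻¹uⁿ for τ > 0. Then ‖u_prel^{n+1}‖²_{L²} = 1 + ‖u_prel^{n+1} − uⁿ‖²_{L²}; in particular ‖u_prel^{n+1}‖_{L²} ≥ 1, with strict inequality whenever u_prel^{n+1} ≠ uⁿ. -/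
/-- Mass increase of the preliminary iterate: In a real vector space `H`
with two inner products, the `L²` product `b` and the (iterate-dependent) `X`-product
`aX`, let `uⁿ` be `L²`-normalized (`b uⁿ uⁿ = 1`), let `Li = L⁻¹ uⁿ` be determined by
`aX Li v = b uⁿ v` for all `v`, set `γ = (b Li uⁿ)⁻¹` and
`u_prel = (1 − τ) • uⁿ + (τ γ) • Li` for `τ > 0`. Then
`‖u_prel‖²_{L²} = 1 + ‖u_prel − uⁿ‖²_{L²}`; in particular `‖u_prel‖_{L²} ≥ 1`, with
strict inequality whenever `u_prel ≠ uⁿ`. -/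
theorem preliminary_iterate_mass_increase
    {H : Type*} [AddCommGroup H] [Module ℝ H]
    (aX b : LinearMap.BilinForm ℝ H)
    (haXsymm : ∀ u v : H, aX u v = aX v u)
    (hbsymm : ∀ u v : H, b u v = b v u)
    (haXpos : ∀ v : H, v ≠ 0 → 0 < aX v v)
    (hbpos : ∀ v : H, v ≠ 0 → 0 < b v v)
    (un Li : H)
    (hun : b un un = 1)
    (hLi : ∀ v : H, aX Li v = b un v)
    (τ : ℝ) (hτ : 0 < τ)
    (uprel : H)
    (huprel : uprel = (1 - τ) • un + (τ * (b Li un)⁻¹) • Li) :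
    b uprel uprel = 1 + b (uprel - un) (uprel - un) ∧
      1 ≤ Real.sqrt (b uprel uprel) ∧
      (uprel ≠ un → 1 < Real.sqrt (b uprel uprel)) := by
  -- Li ≠ 0, since aX Li un = b un un = 1
  have hLine : Li ≠ 0 := by
    intro h
    have := hLi un
    rw [h, hun] at this
    simp at this
  have hbLiun : 0 < b Li un := by
    have h1 : aX Li Li = b un Li := hLi Li
    rw [hbsymm un Li] at h1
    rw [← h1]
    exact haXpos Li hLine
  have hγ : (b Li un)⁻¹ * b Li un = 1 := inv_mul_cancel₀ hbLiun.ne'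
  -- b un uprel = 1
  have hkey : b un uprel = 1 := by
    rw [huprel]
    simp only [map_add, map_smul, smul_eq_mul, LinearMap.add_apply, LinearMap.smul_apply]
    rw [hun, hbsymm un Li]
    ring_nf
    rw [mul_assoc, mul_inv_cancel₀ hbLiun.ne']
    ring
  have hmain : b uprel uprel = 1 + b (uprel - un) (uprel - un) := by
    have hexp : b (uprel - un) (uprel - un)
        = b uprel uprel - b uprel un - b un uprel + b un un := by
      simp only [map_sub, LinearMap.sub_apply]
      ring
    rw [hexp, hun, hbsymm uprel un, hkey]
    ring
  have hdnn : 0 ≤ b (uprel - un) (uprel - un) := by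
    rcases eq_or_ne uprel un with h | h
    · simp [h]
    · exact (hbpos _ (sub_ne_zero.mpr h)).le
  refine ⟨hmain, ?_, ?_⟩
  · rw [show (1:ℝ) = Real.sqrt 1 by simp]
    exact Real.sqrt_le_sqrt (by linarith)
  · intro h
    rw [show (1:ℝ) = Real.sqrt 1 by simp]
    have := hbpos _ (sub_ne_zero.mpr h)
    exact Real.sqrt_lt_sqrt (by norm_num) (by linarith)
end

section
/- (A priori bound on the update step.) In the metric-driven iteration u_prel^{n+1} = (1−τ)uⁿ + τγ L_{uⁿ}⁻¹uⁿ with γ = (L_{uⁿ}⁻¹uⁿ, uⁿ)_{L²}^{-1} ≥ 0 and ‖uⁿ‖_{L²} = 1, the energy-norm of the increment satisfies ⟨L₀(u_prel^{n+1}−uⁿ), u_prel^{n+1}−uⁿ⟩ ≤ τ² ⟨L_{uⁿ}uⁿ, uⁿ⟩ ≤ 4τ² E(uⁿ). -/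
/-! The increment is `uₚᵣₑₗ - uⁿ = τ (γ L⁻¹uⁿ - uⁿ)`, and since `L⁻¹uⁿ` represents the `L²`
product with `uⁿ` in the `L`-form, expanding the square gives
`⟨L(γ L⁻¹uⁿ - uⁿ), γ L⁻¹uⁿ - uⁿ⟩ = ⟨L uⁿ, uⁿ⟩ - γ ≤ ⟨L uⁿ, uⁿ⟩`.
The bound for `L₀` follows from `L₀ ≤ L`. -/

namespace LinearMap.BilinForm

variable {K H : Type*} [Field K] [AddCommGroup H] [Module K H]

/-- Also valid in the degenerate case `b w u = 0`, where `(b w u)⁻¹ = 0`. -/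
theorem apply_inv_smul_sub_self_of_represents (ℓ b : LinearMap.BilinForm K H)
    (hℓsymm : ∀ v w : H, ℓ v w = ℓ w v) (hbsymm : ∀ v w : H, b v w = b w v) {u w : H}
    (hu : b u u = 1) (hw : ∀ v : H, ℓ w v = b u v) :
    ℓ ((b w u)⁻¹ • w - u) ((b w u)⁻¹ • w - u) = ℓ u u - (b w u)⁻¹ := by
  have hww : ℓ w w = b w u := by rw [hw, hbsymm]
  have hwu : ℓ w u = 1 := by rw [hw, hu]
  have huw : ℓ u w = 1 := by rw [hℓsymm, hwu]
  have hcancel : (b w u)⁻¹ * (b w u)⁻¹ * b w u = (b w u)⁻¹ := by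
    simpa only [inv_inv] using mul_self_mul_inv (b w u)⁻¹
  simp only [map_sub, map_smul, LinearMap.sub_apply, LinearMap.smul_apply, smul_eq_mul,
    hww, hwu, huw]
  linear_combination hcancel

end LinearMap.BilinForm

theorem update_step_apriori_bound_general
    {H : Type*} [AddCommGroup H] [Module ℝ H]
    (ℓ0 ℓ b : LinearMap.BilinForm ℝ H)
    (hℓsymm : ∀ v w : H, ℓ v w = ℓ w v)
    (hbsymm : ∀ v w : H, b v w = b w v)
    (hmono : ∀ v : H, ℓ0 v v ≤ ℓ v v)
    (un Li : H)
    (hun : b un un = 1)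
    (hLi : ∀ v : H, ℓ Li v = b un v)
    (hγ : 0 ≤ (b Li un)⁻¹)
    (En : ℝ) (hEn : ℓ un un ≤ 4 * En)
    (τ : ℝ)
    (uprel : H)
    (huprel : uprel = (1 - τ) • un + (τ * (b Li un)⁻¹) • Li) :
    ℓ0 (uprel - un) (uprel - un) ≤ τ ^ 2 * ℓ un un ∧
      τ ^ 2 * ℓ un un ≤ 4 * τ ^ 2 * En := by
  have hincrement : uprel - un = τ • ((b Li un)⁻¹ • Li - un) := by
    rw [huprel]; module
  have henergy : ℓ (uprel - un) (uprel - un) = τ ^ 2 * (ℓ un un - (b Li un)⁻¹) := by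
    rw [hincrement, ← LinearMap.BilinForm.apply_inv_smul_sub_self_of_represents ℓ b hℓsymm
      hbsymm hun hLi]
    simp only [map_smul, LinearMap.smul_apply, smul_eq_mul]
    ring
  have hτ2 : 0 ≤ τ ^ 2 := sq_nonneg τ
  constructor
  · calc ℓ0 (uprel - un) (uprel - un) ≤ ℓ (uprel - un) (uprel - un) := hmono _
      _ = τ ^ 2 * (ℓ un un - (b Li un)⁻¹) := henergy
      _ ≤ τ ^ 2 * ℓ un un := mul_le_mul_of_nonneg_left (sub_le_self _ hγ) hτ2
  · linarith [mul_le_mul_of_nonneg_left hEn hτ2]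

/-- A priori bound on the update step: In the metric-driven iteration
`u_prel = (1 − τ) • uⁿ + (τ γ) • L_{uⁿ}⁻¹ uⁿ` with `γ = (L_{uⁿ}⁻¹uⁿ, uⁿ)_{L²}⁻¹ ≥ 0`
and `‖uⁿ‖_{L²} = 1`, where `ℓ0 = ⟨L₀·,·⟩ ≤ ℓ = ⟨L_{uⁿ}·,·⟩` (nonnegative nonlinear
part) and `⟨L_{uⁿ} uⁿ, uⁿ⟩ ≤ 4 E(uⁿ)`, the energy norm of the increment satisfies
`⟨L₀(u_prel − uⁿ), u_prel − uⁿ⟩ ≤ τ² ⟨L_{uⁿ} uⁿ, uⁿ⟩ ≤ 4 τ² E(uⁿ)`. -/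
theorem update_step_apriori_bound
    {H : Type*} [AddCommGroup H] [Module ℝ H]
    (ℓ0 ℓ b : LinearMap.BilinForm ℝ H)
    (hℓsymm : ∀ v w : H, ℓ v w = ℓ w v)
    (hbsymm : ∀ v w : H, b v w = b w v)
    (hmono : ∀ v : H, ℓ0 v v ≤ ℓ v v)
    (un Li : H)
    (hun : b un un = 1)
    (hLi : ∀ v : H, ℓ Li v = b un v)
    (hγ : 0 ≤ (b Li un)⁻¹)
    (En : ℝ) (hEn : ℓ un un ≤ 4 * En)
    (τ : ℝ) (hτ : 0 < τ)
    (uprel : H)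
    (huprel : uprel = (1 - τ) • un + (τ * (b Li un)⁻¹) • Li) :
    ℓ0 (uprel - un) (uprel - un) ≤ τ ^ 2 * ℓ un un ∧
      τ ^ 2 * ℓ un un ≤ 4 * τ ^ 2 * En :=
  update_step_apriori_bound_general ℓ0 ℓ b hℓsymm hbsymm hmono un Li hun hLi hγ En hEn τ uprel
    huprel
end
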